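/- Suppose a family of symmetric real/complex coefficients a_{j₁,…,j_r,i} (indexed by j₁,…,j_r, i ∈ {1,2}, symmetric in the first r indices) satisfies: (1) a_{j₁,…,j_r,i} + Σ_{k=1}^r a_{i,j₁,…,ĵ_k,…,j_r,j_k} = 0 for all indices, and (2) a_{i,j₁,…,ĵ_k,…,j_r,j_k} = a_{j₁,…,j_r,i} whenever j_k ≠ i. Then all coefficients a_{j₁,…,j_r,i} vanish. -/

import Mathlib

/-!
Every one of the `r` exchanged terms in (1) equals `a_{j,i}`: by (2) when `j_k ≠ i`, and by
symmetry when `j_k = i`, since then `(i, j₁,…,ĵ_k,…,j_r)` is a rearrangement of `j`.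
So (1) reads `(r + 1) a_{j,i} = 0`.
-/

theorem exchange_eq_of_symm {ι R : Type*} {m : ℕ} (a : (Fin (m + 1) → ι) → ι → R)
    (hsymm : ∀ (j : Fin (m + 1) → ι) (σ : Equiv.Perm (Fin (m + 1))) (i : ι), a (j ∘ σ) i = a j i)
    (h2 : ∀ (j : Fin (m + 1) → ι) (i : ι) (k : Fin (m + 1)),
      j k ≠ i → a (Fin.cons i (j ∘ k.succAbove)) (j k) = a j i)
    (j : Fin (m + 1) → ι) (i : ι) (k : Fin (m + 1)) :
    a (Fin.cons i (j ∘ k.succAbove)) (j k) = a j i := by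
  by_cases hk : j k = i
  · subst hk
    rw [show (Fin.cons (j k) (j ∘ k.succAbove) : Fin (m + 1) → ι) = j ∘ k.cycleRange.symm from
      Fin.cons_removeNth_eq_comp_cycleRange_symm j k, hsymm]
  · exact h2 j i k hk

/-- Combinatorial vanishing lemma (dimension 2). Coefficients `a_{j₁,…,j_r,i}`
(`r = m+1` symmetric indices plus one extra index, all in `{1,2}`) satisfying
(1) `a_{j₁,…,j_r,i} + ∑ₖ a_{i,j₁,…,ĵₖ,…,j_r,j_k} = 0`, and
(2) `a_{i,j₁,…,ĵₖ,…,j_r,j_k} = a_{j₁,…,j_r,i}` whenever `j_k ≠ i`,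
must all vanish. Here the tuple `(i, j₁,…,ĵₖ,…,j_r)` is
`Fin.cons i (j ∘ k.succAbove)`. -/
theorem coefficients_vanish_dim2 {m : ℕ}
    (a : (Fin (m + 1) → Fin 2) → Fin 2 → ℝ)
    (hsymm : ∀ (j : Fin (m + 1) → Fin 2) (σ : Equiv.Perm (Fin (m + 1))) (i : Fin 2),
      a (j ∘ σ) i = a j i)
    (h1 : ∀ (j : Fin (m + 1) → Fin 2) (i : Fin 2),
      a j i + ∑ k : Fin (m + 1), a (Fin.cons i (j ∘ k.succAbove)) (j k) = 0)
    (h2 : ∀ (j : Fin (m + 1) → Fin 2) (i : Fin 2) (k : Fin (m + 1)),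
      j k ≠ i → a (Fin.cons i (j ∘ k.succAbove)) (j k) = a j i) :
    ∀ (j : Fin (m + 1) → Fin 2) (i : Fin 2), a j i = 0 := by
  intro j i
  have h := h1 j i
  simp only [exchange_eq_of_symm a hsymm h2, Finset.sum_const, Finset.card_univ,
    Fintype.card_fin, nsmul_eq_mul, Nat.cast_add, Nat.cast_one] at h
  have hmul : ((m : ℝ) + 2) * a j i = 0 := by linarith
  exact (mul_eq_zero.mp hmul).resolve_left (by positivity)
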